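/- arXiv:2310.10249 — 6 statements merged into one kernel-verified Lean document; each statement's English description precedes it below -/
import Mathlib

section
/- In the ring of formal power series in t over Q(q), the following identity holds: (1 - q^{-1} t)/(1 - t) = \sum_{k=0}^{\infty} t^k \prod_{j=1}^{k} (1 - q^{-1} t^{j-1})/(1 - q^{-1} t^{j+1}). -/
/-!
Put `a = q⁻¹`. The product telescopes, so the `k`-th summand is
`(1 - a) (1 - a t) t ^ k / ((1 - a t ^ k) (1 - a t ^ (k + 1)))
  = (1 - a) (1 - a t) (g k - g (k + 1))` with `g k = t ^ k / ((1 - t) (1 - a t ^ k))`.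
Hence the left-hand side minus the `N`-th partial sum is `(1 - a) (1 - a t) g (N + 1)`, a multiple
of `t ^ (N + 1)`. The rational identities are proved in an arbitrary field and transported to power
series through the embedding into Laurent series.
-/

open Finset PowerSeries

section Telescoping

variable {L : Type*} [Field L] (a x : L)

theorem prod_Icc_one_sub_mul_pow_pred_mul (k : ℕ) :
    (∏ j ∈ Icc 1 k, (1 - a * x ^ (j - 1))) * ((1 - a * x ^ k) * (1 - a * x ^ (k + 1))) =
      (1 - a) * (1 - a * x) * ∏ j ∈ Icc 1 k, (1 - a * x ^ (j + 1)) := by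
  induction k with
  | zero => simp [mul_comm]
  | succ k ih =>
    rw [prod_Icc_succ_top (by omega), prod_Icc_succ_top (by omega), Nat.add_sub_cancel]
    linear_combination (1 - a * x ^ (k + 2)) * ih

variable {a x} (ha : ∀ m : ℕ, 1 - a * x ^ m ≠ 0)
include ha

theorem pow_mul_prod_div_prod_eq (k : ℕ) :
    x ^ k * (∏ j ∈ Icc 1 k, (1 - a * x ^ (j - 1))) / ∏ j ∈ Icc 1 k, (1 - a * x ^ (j + 1)) =
      (1 - a) * (1 - a * x) * (x ^ k / ((1 - a * x ^ k) * (1 - a * x ^ (k + 1)))) := by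
  rw [mul_div_assoc', div_eq_div_iff (prod_ne_zero_iff.2 fun j _ ↦ ha (j + 1))
    (mul_ne_zero (ha k) (ha (k + 1)))]
  linear_combination x ^ k * prod_Icc_one_sub_mul_pow_pred_mul a x k

variable (hx : 1 - x ≠ 0)
include hx

theorem sub_div_one_sub_mul_pow_succ (k : ℕ) :
    x ^ k / ((1 - x) * (1 - a * x ^ k)) - x ^ (k + 1) / ((1 - x) * (1 - a * x ^ (k + 1))) =
      x ^ k / ((1 - a * x ^ k) * (1 - a * x ^ (k + 1))) := by
  rw [div_sub_div _ _ (mul_ne_zero hx (ha k)) (mul_ne_zero hx (ha (k + 1))),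
    div_eq_div_iff (by simp [hx, ha]) (mul_ne_zero (ha k) (ha (k + 1)))]
  ring

theorem sum_range_pow_mul_prod_div_prod (n : ℕ) :
    ∑ k ∈ range n,
        x ^ k * (∏ j ∈ Icc 1 k, (1 - a * x ^ (j - 1))) / ∏ j ∈ Icc 1 k, (1 - a * x ^ (j + 1)) =
      (1 - a * x) / (1 - x) - x ^ n * ((1 - a) * (1 - a * x) / ((1 - x) * (1 - a * x ^ n))) := by
  have h0 : 1 - a ≠ 0 := by simpa using ha 0
  simp only [pow_mul_prod_div_prod_eq ha, ← sub_div_one_sub_mul_pow_succ ha hx, ← mul_sum,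
    sum_range_sub' (fun k ↦ x ^ k / ((1 - x) * (1 - a * x ^ k)))]
  field_simp

end Telescoping

namespace PowerSeries

variable {k L : Type*} [Field k] [Field L] (f : k⟦X⟧ →+* L) {φ : k⟦X⟧}

theorem map_inv_of_constantCoeff_ne_zero (h : constantCoeff φ ≠ 0) : f φ⁻¹ = (f φ)⁻¹ :=
  eq_inv_of_mul_eq_one_left (by rw [← map_mul, PowerSeries.inv_mul_cancel φ h, map_one])

theorem map_ne_zero_of_constantCoeff_ne_zero (h : constantCoeff φ ≠ 0) : f φ ≠ 0 :=
  ((isUnit_iff_constantCoeff.2 h.isUnit).map f).ne_zero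

theorem constantCoeff_one_sub_C_mul_X_pow_ne_zero {a : k} (ha : a ≠ 1) (m : ℕ) :
    constantCoeff (1 - C a * X ^ m) ≠ 0 := by
  rcases m with _ | m <;> simp [sub_ne_zero, ha.symm]

theorem sub_sum_range_eq_X_pow_mul {a : k} (ha : a ≠ 1) (n : ℕ) :
    (1 - C a * X) * (1 - X)⁻¹ -
        ∑ i ∈ range n, X ^ i * (∏ j ∈ Icc 1 i, (1 - C a * X ^ (j - 1))) *
          (∏ j ∈ Icc 1 i, (1 - C a * X ^ (j + 1)))⁻¹ =
      X ^ n * ((1 - C a) * (1 - C a * X) * ((1 - X) * (1 - C a * X ^ n))⁻¹) := by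
  have hc := constantCoeff_one_sub_C_mul_X_pow_ne_zero ha
  have h1 : constantCoeff (1 - X : k⟦X⟧) ≠ 0 := by simp
  have hQ (i : ℕ) : constantCoeff (∏ j ∈ Icc 1 i, (1 - C a * X ^ (j + 1))) ≠ 0 := by
    rw [map_prod]
    exact prod_ne_zero_iff.2 fun j _ ↦ hc (j + 1)
  have hD : constantCoeff ((1 - X) * (1 - C a * X ^ n)) ≠ 0 := by
    rw [map_mul]
    exact mul_ne_zero h1 (hc n)
  set f := HahnSeries.ofPowerSeries ℤ k
  have hA (m : ℕ) : 1 - f (C a) * f X ^ m ≠ 0 := by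
    simpa only [map_sub, map_one, map_mul, map_pow] using
      map_ne_zero_of_constantCoeff_ne_zero f (hc m)
  have hx : 1 - f X ≠ 0 := by
    simpa only [map_sub, map_one] using map_ne_zero_of_constantCoeff_ne_zero f h1
  apply HahnSeries.ofPowerSeries_injective (Γ := ℤ)
  simp only [map_sub, map_sum, map_mul, map_pow, map_one, map_prod,
    map_inv_of_constantCoeff_ne_zero _ h1, map_inv_of_constantCoeff_ne_zero _ (hQ _),
    map_inv_of_constantCoeff_ne_zero _ hD]
  simp only [← div_eq_mul_inv]
  rw [sum_range_pow_mul_prod_div_prod hA hx]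
  ring

end PowerSeries

/-- In `ℚ(q)[[t]]`, `(1 - q⁻¹ t)/(1 - t) = ∑_{k≥0} t^k ∏_{j=1}^k (1 - q⁻¹ t^{j-1})/(1 - q⁻¹ t^{j+1})`,
stated coefficient-wise (only the summands with `k ≤ N` contribute to the coefficient of `t^N`). -/
theorem product_series_identity :
    let F := RatFunc ℚ
    let q : F := RatFunc.X
    let t : PowerSeries F := PowerSeries.X
    ∀ N : ℕ,
      (PowerSeries.coeff (R := F) N) ((1 - PowerSeries.C (R := F) q⁻¹ * t) * (1 - t)⁻¹) =
        ∑ k ∈ Finset.range (N + 1),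
          (PowerSeries.coeff (R := F) N)
            (t ^ k * (∏ j ∈ Finset.Icc 1 k, (1 - PowerSeries.C (R := F) q⁻¹ * t ^ (j - 1))) *
              (∏ j ∈ Finset.Icc 1 k, (1 - PowerSeries.C (R := F) q⁻¹ * t ^ (j + 1)))⁻¹) := by
  intro F q t N
  have hq : q⁻¹ ≠ 1 := inv_ne_one.2 fun h ↦ by simpa [q] using congrArg RatFunc.intDegree h
  rw [← sub_eq_zero, ← map_sum, ← map_sub, sub_sum_range_eq_X_pow_mul hq, coeff_X_pow_mul',
    if_neg (by omega)]
end

section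
/- Let \lambda be a partition of n and T a non-negative reverse Young tableau of shape \lambda. The filling S(T) defined by ordering the boxes of \lambda by: box a precedes box b iff T(a) > T(b), or T(a) = T(b) and a comes before b in the column-standard labelling, is a standard Young tableau, i.e., it is a bijective labelling by {1,...,n} that strictly increases along rows and columns. -/
open scoped Classical

/-- A non-negative reverse Young tableau: weakly decreasing along rows and columns. -/
def IsRYT (μ : YoungDiagram) (T : ℕ × ℕ → ℕ) : Prop :=
  (∀ c ∈ μ.cells, (c.1, c.2 + 1) ∈ μ.cells → T (c.1, c.2 + 1) ≤ T c) ∧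
  (∀ c ∈ μ.cells, (c.1 + 1, c.2) ∈ μ.cells → T (c.1 + 1, c.2) ≤ T c)

/-- Column-standard (column-reading) order on boxes. -/
def colOrd (a b : ℕ × ℕ) : Prop := a.2 < b.2 ∨ (a.2 = b.2 ∧ a.1 < b.1)

/-- Box `a` precedes box `b` in the order defining `S(T)`. -/
def precBox (T : ℕ × ℕ → ℕ) (a b : ℕ × ℕ) : Prop :=
  T b < T a ∨ (T a = T b ∧ colOrd a b)

/-- `S(T)(b)`: one plus the number of boxes preceding `b`. -/
noncomputable def Slab (μ : YoungDiagram) (T : ℕ × ℕ → ℕ) (b : ℕ × ℕ) : ℕ :=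
  (μ.cells.filter (fun a => precBox T a b)).card + 1

/-- A standard Young tableau of shape `μ` with `n = |μ|`: a bijective labelling of the cells
by `{1, …, n}`, strictly increasing along rows and columns. -/
def IsSYT (μ : YoungDiagram) (n : ℕ) (s : ℕ × ℕ → ℕ) : Prop :=
  Set.BijOn s (↑μ.cells) (↑(Finset.Icc 1 n)) ∧
  (∀ c ∈ μ.cells, (c.1, c.2 + 1) ∈ μ.cells → s c < s (c.1, c.2 + 1)) ∧
  (∀ c ∈ μ.cells, (c.1 + 1, c.2) ∈ μ.cells → s c < s (c.1 + 1, c.2))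


lemma precBox_irrefl (T : ℕ × ℕ → ℕ) (a : ℕ × ℕ) : ¬ precBox T a a := by
  unfold precBox colOrd; omega

lemma precBox_trans {T : ℕ × ℕ → ℕ} {a b c : ℕ × ℕ}
    (h1 : precBox T a b) (h2 : precBox T b c) : precBox T a c := by
  unfold precBox colOrd at *; omega

lemma precBox_total {T : ℕ × ℕ → ℕ} {a b : ℕ × ℕ} (h : a ≠ b) :
    precBox T a b ∨ precBox T b a := by
  have : a.1 ≠ b.1 ∨ a.2 ≠ b.2 := by
    by_contra hc
    push_neg at hc
    exact h (Prod.ext hc.1 hc.2)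
  unfold precBox colOrd; omega

lemma Slab_lt (μ : YoungDiagram) (T : ℕ × ℕ → ℕ) {a b : ℕ × ℕ}
    (ha : a ∈ μ.cells) (hab : precBox T a b) : Slab μ T a < Slab μ T b := by
  unfold Slab
  have hss : μ.cells.filter (fun x => precBox T x a) ⊂ μ.cells.filter (fun x => precBox T x b) := by
    constructor
    · intro x hx
      simp only [Finset.mem_filter] at hx ⊢
      exact ⟨hx.1, precBox_trans hx.2 hab⟩
    · intro h
      have := h (Finset.mem_filter.mpr ⟨ha, hab⟩)
      simp only [Finset.mem_filter] at this
      exact precBox_irrefl T a this.2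
  have := Finset.card_lt_card hss
  omega

/-- for any non-negative reverse Young tableau `T` of shape `μ` with `n` boxes,
the labelling `S(T)` is a standard Young tableau of shape `μ`. -/
theorem S_of_RYT_is_SYT (μ : YoungDiagram) (n : ℕ) (hn : μ.cells.card = n)
    (T : ℕ × ℕ → ℕ) (hT : IsRYT μ T) :
    IsSYT μ n (Slab μ T) := by
  have hmaps : ∀ b ∈ μ.cells, Slab μ T b ∈ Finset.Icc 1 n := by
    intro b hb
    have hsub : μ.cells.filter (fun a => precBox T a b) ⊆ μ.cells.erase b := by
      intro x hx
      simp only [Finset.mem_filter] at hx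
      refine Finset.mem_erase.mpr ⟨?_, hx.1⟩
      rintro rfl
      exact precBox_irrefl T x hx.2
    have h1 := Finset.card_le_card hsub
    have h2 : (μ.cells.erase b).card = n - 1 := by
      rw [Finset.card_erase_of_mem hb, hn]
    have hn1 : 1 ≤ n := by
      have := Finset.card_pos.mpr ⟨b, hb⟩
      omega
    simp only [Slab, Finset.mem_Icc]
    omega
  have hinj : Set.InjOn (Slab μ T) ↑μ.cells := by
    intro a ha b hb hab
    by_contra hne
    rcases precBox_total (T := T) hne with h | h
    · have := Slab_lt μ T (Finset.mem_coe.mp ha) h; omega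
    · have := Slab_lt μ T (Finset.mem_coe.mp hb) h; omega
  refine ⟨⟨fun b hb => hmaps b hb, hinj, ?_⟩, ?_, ?_⟩
  · have hcard : (Finset.Icc 1 n).card ≤ μ.cells.card := by
      simp [hn]
    intro y hy
    obtain ⟨x, hx, hxy⟩ := Finset.surj_on_of_inj_on_of_card_le
      (fun a (_ : a ∈ μ.cells) => Slab μ T a)
      (fun a ha => hmaps a ha)
      (fun a b ha hb h => hinj (Finset.mem_coe.mpr ha) (Finset.mem_coe.mpr hb) h)
      hcard y (Finset.mem_coe.mp hy)
    exact ⟨x, Finset.mem_coe.mpr hx, hxy.symm⟩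
  · intro c hc hc'
    apply Slab_lt μ T hc
    have := hT.1 c hc hc'
    unfold precBox colOrd; simp; omega
  · intro c hc hc'
    apply Slab_lt μ T hc
    have := hT.2 c hc hc'
    unfold precBox colOrd; simp; omega
end

section
/- Let \lambda be a partition of n and let \tau be a non-negative periodic standard Young tableau of shape \lambda. Then the map \Psi(\tau), defined by replacing each entry k q^a with (k-1) q^a when k \geq 2 and each entry 1 q^a with n q^{a+1}, is again a non-negative periodic standard Young tableau of shape \lambda. -/
open scoped Classical

/-- Order on the formal symbols `j q^b`, encoded as pairs `(j, b)`:
`j q^m < k q^l` iff `m > l`, or `m = l` and `j < k`. -/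
def symbLt (x y : ℕ × ℕ) : Prop := y.2 < x.2 ∨ (x.2 = y.2 ∧ x.1 < y.1)

/-- A non-negative periodic standard Young tableau of shape `μ` with `|μ| = n`:
a labelling of the cells by symbols `j q^b` (pairs `(j, b)` with `1 ≤ j ≤ n`), each index
`j ∈ {1, …, n}` used in exactly one box, strictly increasing along rows and columns. -/
def IsPSYT (μ : YoungDiagram) (n : ℕ) (τ : ℕ × ℕ → ℕ × ℕ) : Prop :=
  (∀ c ∈ μ.cells, 1 ≤ (τ c).1 ∧ (τ c).1 ≤ n) ∧
  (∀ j, 1 ≤ j → j ≤ n → ∃! c, c ∈ μ.cells ∧ (τ c).1 = j) ∧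
  (∀ c ∈ μ.cells, (c.1, c.2 + 1) ∈ μ.cells → symbLt (τ c) (τ (c.1, c.2 + 1))) ∧
  (∀ c ∈ μ.cells, (c.1 + 1, c.2) ∈ μ.cells → symbLt (τ c) (τ (c.1 + 1, c.2)))

/-- The map `Ψ`: replace `k q^a` by `(k-1) q^a` for `k ≥ 2`, and `1 q^a` by `n q^{a+1}`. -/
def psiMap (n : ℕ) (τ : ℕ × ℕ → ℕ × ℕ) : ℕ × ℕ → ℕ × ℕ :=
  fun c => if 2 ≤ (τ c).1 then ((τ c).1 - 1, (τ c).2) else (n, (τ c).2 + 1)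

/-- `Ψ(τ)` is again a non-negative periodic standard Young tableau. -/
theorem psi_preserves_PSYT (μ : YoungDiagram) (n : ℕ) (hn : μ.cells.card = n)
    (τ : ℕ × ℕ → ℕ × ℕ) (hτ : IsPSYT μ n τ) :
    IsPSYT μ n (psiMap n τ) := by
  obtain ⟨hb, hu, hrow, hcol⟩ := hτ
  have key : ∀ c ∈ μ.cells, ∀ c' ∈ μ.cells, symbLt (τ c) (τ c') →
      symbLt (psiMap n τ c) (psiMap n τ c') := by
    intro c hcm c' hcm' hlt
    obtain ⟨h1, h2⟩ := hb c hcm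
    obtain ⟨h1', h2'⟩ := hb c' hcm'
    unfold psiMap
    rcases hlt with h | ⟨he, hl⟩ <;>
      by_cases k : 2 ≤ (τ c).1 <;> by_cases k' : 2 ≤ (τ c').1 <;>
        simp [k, k', symbLt] <;> omega
  refine ⟨?_, ?_, ?_, ?_⟩
  · intro c hcm
    obtain ⟨h1, h2⟩ := hb c hcm
    unfold psiMap
    by_cases k : 2 ≤ (τ c).1 <;> simp [k] <;> omega
  · intro j hj1 hjn
    by_cases hjn' : j < n
    · obtain ⟨c, ⟨hcm, hcj⟩, huniq⟩ := hu (j+1) (by omega) (by omega)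
      refine ⟨c, ⟨hcm, ?_⟩, ?_⟩
      · unfold psiMap; rw [hcj]; simp [hj1]
      · rintro c' ⟨hcm', hcj'⟩
        obtain ⟨h1', h2'⟩ := hb c' hcm'
        unfold psiMap at hcj'
        by_cases k : 2 ≤ (τ c').1
        · simp [k] at hcj'
          exact huniq c' ⟨hcm', by omega⟩
        · simp [k] at hcj'; omega
    · have hjeq : j = n := by omega
      obtain ⟨c, ⟨hcm, hcj⟩, huniq⟩ := hu 1 le_rfl (by omega)
      refine ⟨c, ⟨hcm, ?_⟩, ?_⟩
      · unfold psiMap; rw [hcj]; simp; omega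
      · rintro c' ⟨hcm', hcj'⟩
        obtain ⟨h1', h2'⟩ := hb c' hcm'
        unfold psiMap at hcj'
        by_cases k : 2 ≤ (τ c').1
        · simp [k] at hcj'; omega
        · exact huniq c' ⟨hcm', by omega⟩
  · intro c hcm h2
    exact key c hcm _ h2 (hrow c hcm h2)
  · intro c hcm h2
    exact key c hcm _ h2 (hcol c hcm h2)
end

section
/- In the finite Hecke algebra H_n, the elements \bar\theta_1, ..., \bar\theta_n defined by \bar\theta_1 = 1 and \bar\theta_{i+1} = t T_i^{-1} \bar\theta_i T_i^{-1} pairwise commute. -/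
/-- The explicit inverse `T_i⁻¹ = t⁻¹(T_i - 1 + t)` of a Hecke generator. -/
noncomputable def heckeTinv {F : Type*} [Field F] {A : Type*} [Ring A] [Algebra F A]
    (t : F) (T : ℕ → A) (i : ℕ) : A :=
  t⁻¹ • (T i - 1 + t • 1)

/-- The Jucys–Murphy type elements `θ̄₁ = 1`, `θ̄_{i+1} = t T_i⁻¹ θ̄_i T_i⁻¹`
(here `thetaBar t T i` is `θ̄_i`). -/
noncomputable def thetaBar {F : Type*} [Field F] {A : Type*} [Ring A] [Algebra F A]
    (t : F) (T : ℕ → A) : ℕ → A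
  | 0 => 1
  | 1 => 1
  | (i + 2) => t • (heckeTinv t T (i + 1) * thetaBar t T (i + 1) * heckeTinv t T (i + 1))

section Aux
variable {F : Type*} [Field F] {A : Type*} [Ring A] [Algebra F A]

lemma hecke_inv (t : F) (ht : t ≠ 0) (T : ℕ → A) (i : ℕ)
    (hq : (T i - 1) * (T i + t • 1) = 0) :
    T i * heckeTinv t T i = 1 ∧ heckeTinv t T i * T i = 1 := by
  have key : T i * T i - T i + t • T i = t • (1:A) := by
    have h2 : T i * T i + t • T i - T i - t • (1:A) = 0 := by
      rw [← hq]; simp only [mul_add, sub_mul, mul_smul_comm, smul_add, smul_sub,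
        mul_one, one_mul]; abel
    have h3 : T i * T i - T i + t • T i - t • (1:A) = 0 := by rw [← h2]; abel
    exact sub_eq_zero.mp h3
  constructor
  · rw [heckeTinv, mul_smul_comm]
    have h4 : T i * (T i - 1 + t • 1) = t • (1:A) := by
      have h : T i * (T i - 1 + t • 1) = T i * T i - T i + t • T i := by
        simp only [mul_add, mul_sub, mul_one, mul_smul_comm]
      rw [h, key]
    rw [h4, smul_smul, inv_mul_cancel₀ ht, one_smul]
  · rw [heckeTinv, smul_mul_assoc]
    have h4 : (T i - 1 + t • 1) * T i = t • (1:A) := by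
      have h : (T i - 1 + t • 1) * T i = T i * T i - T i + t • T i := by
        simp only [add_mul, sub_mul, one_mul, smul_mul_assoc]
      rw [h, key]
    rw [h4, smul_smul, inv_mul_cancel₀ ht, one_smul]

lemma comm_heckeTinv (t : F) (T : ℕ → A) (k : ℕ) (x : A) (h : Commute x (T k)) :
    Commute x (heckeTinv t T k) :=
  ((h.sub_right (Commute.one_right x)).add_right
    ((Commute.one_right x).smul_right t)).smul_right t⁻¹

end Aux

lemma braid_inv {A : Type*} [Monoid A] (Ta Tb ua ub : A) (ha : Ta * ua = 1)
    (ha' : ua * Ta = 1) (hb : Tb * ub = 1) (hb' : ub * Tb = 1)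
    (hbr : Ta * Tb * Ta = Tb * Ta * Tb) :
    ua * ub * ua = ub * ua * ub := by
  have ca : ∀ x : A, ua * (Ta * x) = x := fun x => by rw [← mul_assoc, ha', one_mul]
  have cb : ∀ x : A, ub * (Tb * x) = x := fun x => by rw [← mul_assoc, hb', one_mul]
  have da : ∀ x : A, Ta * (ua * x) = x := fun x => by rw [← mul_assoc, ha, one_mul]
  have db : ∀ x : A, Tb * (ub * x) = x := fun x => by rw [← mul_assoc, hb, one_mul]
  have h1 : (ua * ub * ua) * (Ta * Tb * Ta) = 1 := by
    simp only [mul_assoc]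
    rw [ca, cb, ha']
  have h2 : (Ta * Tb * Ta) * (ub * ua * ub) = 1 := by
    rw [hbr]
    simp only [mul_assoc]
    rw [db, da, hb]
  calc ua * ub * ua = ua * ub * ua * ((Ta * Tb * Ta) * (ub * ua * ub)) := by
        rw [h2, mul_one]
    _ = (ua * ub * ua * (Ta * Tb * Ta)) * (ub * ua * ub) := by
        simp only [mul_assoc]
    _ = ub * ua * ub := by rw [h1, one_mul]

lemma key_comm {A : Type*} [Monoid A] (u w Z : A)
    (hbr : u * (w * u) = w * (u * w)) (hZu : Z * u = u * Z)
    (hIH : w * (Z * (w * Z)) = Z * (w * (Z * w))) :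
    u * (w * (Z * (w * (u * (w * (Z * w)))))) =
      w * (Z * (w * (u * (w * (Z * (w * u)))))) := by
  have hbr1 : ∀ x, u * (w * (u * x)) = w * (u * (w * x)) := fun x => by
    have := congrArg (· * x) hbr; simpa [mul_assoc] using this
  have hZu1 : ∀ x, Z * (u * x) = u * (Z * x) := fun x => by
    have := congrArg (· * x) hZu; simpa [mul_assoc] using this
  have hIH1 : ∀ x, w * (Z * (w * (Z * x))) = Z * (w * (Z * (w * x))) := fun x => by
    have := congrArg (· * x) hIH; simpa [mul_assoc] using this
  conv_lhs => rw [← hbr1, hZu1, hbr1, ← hZu1, hIH1, ← hbr]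
  conv_rhs => rw [← hbr1, hZu1]
  rw [hZu1]

section Main
variable {F : Type*} [Field F] {A : Type*} [Ring A] [Algebra F A]
variable (t : F) (T : ℕ → A) (n : ℕ)

lemma tcomm (hcomm : ∀ i j, 1 ≤ i → i ≤ n - 1 → 1 ≤ j → j ≤ n - 1 → i + 1 < j →
      T i * T j = T j * T i) :
    ∀ j k, j + 1 ≤ k → k ≤ n - 1 → Commute (T k) (thetaBar t T j) := by
  intro j
  induction j with
  | zero => intro k _ _; exact Commute.one_right _
  | succ j IH =>
    cases j with
    | zero => intro k _ _; exact Commute.one_right _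
    | succ m =>
      intro k hk hkn
      have cT : Commute (T k) (T (m + 1)) :=
        (hcomm (m + 1) k (by omega) (by omega) (by omega) hkn (by omega)).symm
      have cw : Commute (T k) (heckeTinv t T (m + 1)) := comm_heckeTinv t T _ _ cT
      have cZ : Commute (T k) (thetaBar t T (m + 1)) := IH k (by omega) hkn
      show Commute (T k) (t • (heckeTinv t T (m + 1) * thetaBar t T (m + 1) *
        heckeTinv t T (m + 1)))
      exact ((cw.mul_right cZ).mul_right cw).smul_right t

lemma sLem (ht : t ≠ 0)
    (hquad : ∀ i, 1 ≤ i → i ≤ n - 1 → (T i - 1) * (T i + t • 1) = 0)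
    (hbraid : ∀ i, 1 ≤ i → i + 1 ≤ n - 1 →
      T i * T (i + 1) * T i = T (i + 1) * T i * T (i + 1))
    (hcomm : ∀ i j, 1 ≤ i → i ≤ n - 1 → 1 ≤ j → j ≤ n - 1 → i + 1 < j →
      T i * T j = T j * T i) :
    ∀ m, m ≤ n - 1 →
      heckeTinv t T m * (thetaBar t T m * (heckeTinv t T m * thetaBar t T m)) =
        thetaBar t T m * (heckeTinv t T m * (thetaBar t T m * heckeTinv t T m)) := by
  intro m
  induction m with
  | zero => intro _; simp [thetaBar]
  | succ m IH =>
    cases m with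
    | zero => intro _; simp [thetaBar]
    | succ m =>
      intro hmn
      set u := heckeTinv t T (m + 2) with hu
      set w := heckeTinv t T (m + 1) with hw
      set Z := thetaBar t T (m + 1) with hZ
      have hinv1 := hecke_inv t ht T (m + 1) (hquad (m + 1) (by omega) (by omega))
      have hinv2 := hecke_inv t ht T (m + 2) (hquad (m + 2) (by omega) hmn)
      have hbi : w * u * w = u * w * u :=
        braid_inv (T (m + 1)) (T (m + 2)) w u hinv1.1 hinv1.2 hinv2.1 hinv2.2
          (hbraid (m + 1) (by omega) hmn)
      have hbr : u * (w * u) = w * (u * w) := by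
        rw [← mul_assoc, ← mul_assoc, ← hbi]
      have hZu : Z * u = u * Z := by
        have cT : Commute (T (m + 2)) Z := tcomm t T n hcomm (m + 1) (m + 2) (by omega) hmn
        exact (comm_heckeTinv t T (m + 2) Z cT.symm)
      have hIH : w * (Z * (w * Z)) = Z * (w * (Z * w)) := IH (by omega)
      show u * (t • (w * Z * w) * (u * t • (w * Z * w))) =
        t • (w * Z * w) * (u * (t • (w * Z * w) * u))
      simp only [smul_mul_assoc, mul_smul_comm, mul_assoc]
      rw [key_comm u w Z hbr hZu hIH]

lemma mainLem (ht : t ≠ 0)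
    (hquad : ∀ i, 1 ≤ i → i ≤ n - 1 → (T i - 1) * (T i + t • 1) = 0)
    (hbraid : ∀ i, 1 ≤ i → i + 1 ≤ n - 1 →
      T i * T (i + 1) * T i = T (i + 1) * T i * T (i + 1))
    (hcomm : ∀ i j, 1 ≤ i → i ≤ n - 1 → 1 ≤ j → j ≤ n - 1 → i + 1 < j →
      T i * T j = T j * T i) :
    ∀ i, i ≤ n → ∀ j, j ≤ i → Commute (thetaBar t T j) (thetaBar t T i) := by
  intro i
  induction i with
  | zero => intro _ j hj; interval_cases j; exact Commute.refl _
  | succ i IH =>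
    cases i with
    | zero => intro _ j _; exact Commute.one_right _
    | succ m =>
      intro hin j hj
      rcases Nat.lt_or_ge j (m + 1) with hlt | hge
      · -- j ≤ m
        have cT : Commute (thetaBar t T j) (T (m + 1)) :=
          (tcomm t T n hcomm j (m + 1) (by omega) (by omega)).symm
        have cw : Commute (thetaBar t T j) (heckeTinv t T (m + 1)) :=
          comm_heckeTinv t T _ _ cT
        have cZ : Commute (thetaBar t T j) (thetaBar t T (m + 1)) :=
          IH (by omega) j (by omega)
        show Commute (thetaBar t T j) (t • (heckeTinv t T (m + 1) *
          thetaBar t T (m + 1) * heckeTinv t T (m + 1)))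
        exact ((cw.mul_right cZ).mul_right cw).smul_right t
      · rcases Nat.eq_or_lt_of_le hge with heq | hlt2
        · -- j = m + 1
          have heq' : j = m + 1 := heq.symm
          subst heq'
          have hS := sLem t T n ht hquad hbraid hcomm (m + 1) (by omega)
          show Commute (thetaBar t T (m + 1)) (t • (heckeTinv t T (m + 1) *
            thetaBar t T (m + 1) * heckeTinv t T (m + 1)))
          unfold Commute SemiconjBy
          simp only [smul_mul_assoc, mul_smul_comm, mul_assoc]
          rw [hS]
        · -- j = m + 2
          have : j = m + 2 := by omega
          subst this
          exact Commute.refl _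

end Main

/-- in the finite Hecke algebra `H_n`, the elements `θ̄₁, …, θ̄_n`
pairwise commute. -/
theorem thetaBar_commute (F : Type*) [Field F] (q t : F) (ht : t ≠ 0)
    (A : Type*) [Ring A] [Algebra F A] (n : ℕ) (T : ℕ → A)
    (hquad : ∀ i, 1 ≤ i → i ≤ n - 1 → (T i - 1) * (T i + t • 1) = 0)
    (hbraid : ∀ i, 1 ≤ i → i + 1 ≤ n - 1 →
      T i * T (i + 1) * T i = T (i + 1) * T i * T (i + 1))
    (hcomm : ∀ i j, 1 ≤ i → i ≤ n - 1 → 1 ≤ j → j ≤ n - 1 → i + 1 < j →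
      T i * T j = T j * T i) :
    ∀ i j, 1 ≤ i → i ≤ n → 1 ≤ j → j ≤ n →
      thetaBar t T i * thetaBar t T j = thetaBar t T j * thetaBar t T i := by
  intro i j _ hin _ hjn
  rcases le_total j i with h | h
  · exact (mainLem t T n ht hquad hbraid hcomm i hin j h).symm
  · exact mainLem t T n ht hquad hbraid hcomm j hjn i h
end

section
/- Let \lambda be a partition with |\lambda| = n and let \tau be a standard Young tableau of shape \lambda, viewed as a PSYT with all powers zero. Then \mathfrak{p}_\lambda(\Psi^n(\tau)) is the constant filling of \lambda with value 1; i.e., applying \Psi exactly n times to a standard Young tableau increases every box's power from 0 to 1 and returns the index pattern to a standard Young tableau. -/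
/-- Single-symbol step. -/
def symbStep (n : ℕ) (x : ℕ × ℕ) : ℕ × ℕ :=
  if 2 ≤ x.1 then (x.1 - 1, x.2) else (n, x.2 + 1)

lemma psiMap_iterate (n k : ℕ) (τ : ℕ × ℕ → ℕ × ℕ) (c : ℕ × ℕ) :
    (psiMap n)^[k] τ c = (symbStep n)^[k] (τ c) := by
  induction k with
  | zero => rfl
  | succ k ih =>
      rw [Function.iterate_succ_apply', Function.iterate_succ_apply']
      show symbStep n ((psiMap n)^[k] τ c) = _
      rw [ih]

lemma symbStep_iter_decr (n : ℕ) : ∀ m j b, m < j →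
    (symbStep n)^[m] (j, b) = (j - m, b) := by
  intro m
  induction m with
  | zero => intro j b _; simp
  | succ m ih =>
      intro j b h
      rw [Function.iterate_succ_apply', ih j b (Nat.lt_of_succ_lt h)]
      have h2 : 2 ≤ j - m := by omega
      simp only [symbStep, h2, if_pos]
      simp
      omega

lemma symbStep_iter_n (n j b : ℕ) (h1 : 1 ≤ j) (h2 : j ≤ n) :
    (symbStep n)^[n] (j, b) = (j, b + 1) := by
  have hj : (symbStep n)^[j] (j, b) = (n, b + 1) := by
    obtain ⟨m, rfl⟩ : ∃ m, j = m + 1 := ⟨j - 1, by omega⟩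
    rw [Function.iterate_succ_apply',
      symbStep_iter_decr n m (m + 1) b (by omega)]
    have : m + 1 - m = 1 := by omega
    rw [this]
    simp [symbStep]
  have hiter : (symbStep n)^[n] (j, b)
      = (symbStep n)^[n - j] ((symbStep n)^[j] (j, b)) := by
    rw [← Function.iterate_add_apply]
    congr 1
    omega
  rw [hiter, hj, symbStep_iter_decr n (n - j) n (b + 1) (by omega)]
  congr 1
  omega

/-- if `τ` is a standard Young tableau of shape `μ` with `|μ| = n`
(a PSYT all of whose powers are `0`), then `Ψ^n(τ)` has every power equal to `1`
(so `𝔭_μ(Ψ^n τ)` is the constant filling `1`) and its index pattern is again a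
standard Young tableau (in particular, `Ψ^n(τ)` is a PSYT). -/
theorem psi_iterate_n_of_SYT (μ : YoungDiagram) (n : ℕ) (hn : μ.cells.card = n)
    (τ : ℕ × ℕ → ℕ × ℕ) (hτ : IsPSYT μ n τ) (hz : ∀ c ∈ μ.cells, (τ c).2 = 0) :
    (∀ c ∈ μ.cells, ((psiMap n)^[n] τ c).2 = 1) ∧ IsPSYT μ n ((psiMap n)^[n] τ) := by
  obtain ⟨hrange, huniq, hrow, hcol⟩ := hτ
  have key : ∀ c ∈ μ.cells, (psiMap n)^[n] τ c = ((τ c).1, 1) := by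
    intro c hc
    rw [psiMap_iterate]
    have h1 := (hrange c hc).1
    have h2 := (hrange c hc).2
    have hb := hz c hc
    have : τ c = ((τ c).1, (τ c).2) := rfl
    rw [this, hb, symbStep_iter_n n _ 0 h1 h2]
  constructor
  · intro c hc; rw [key c hc]
  · refine ⟨?_, ?_, ?_, ?_⟩
    · intro c hc; rw [key c hc]; exact hrange c hc
    · intro j hj1 hjn
      obtain ⟨c, ⟨hc, hcj⟩, hu⟩ := huniq j hj1 hjn
      refine ⟨c, ⟨hc, by rw [key c hc]; exact hcj⟩, ?_⟩
      intro c' ⟨hc', hcj'⟩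
      exact hu c' ⟨hc', by rw [key c' hc'] at hcj'; exact hcj'⟩
    · intro c hc hc'
      have h := hrow c hc hc'
      rw [key c hc, key _ hc']
      rcases h with h | ⟨_, h⟩
      · rw [hz c hc, hz _ hc'] at h; omega
      · exact Or.inr ⟨rfl, h⟩
    · intro c hc hc'
      have h := hcol c hc hc'
      rw [key c hc, key _ hc']
      rcases h with h | ⟨_, h⟩
      · rw [hz c hc, hz _ hc'] at h; omega
      · exact Or.inr ⟨rfl, h⟩
end

section
/- For any partition \lambda of n and any non-negative reverse Young tableau T of shape \lambda, the statistic b_T := \sum_{i=1}^n \nu(T)_i (c_{S(T)}(i) + i - 1) is a non-negative integer. -/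
open scoped Classical

/-- Content of a box `(a, b)` (row `a`, column `b`, zero-indexed). -/
def content (c : ℕ × ℕ) : ℤ := (c.2 : ℤ) - (c.1 : ℤ)

/-!
Every summand is non-negative. Since `T` weakly decreases down columns, each of the `a` boxes
above a box `c = (a, b)` has a `T`-value at least `T c` and comes earlier in column order, so it
precedes `c` in `S(T)`. Hence `Slab μ T c - 1 ≥ a`, and `content c + Slab μ T c - 1 ≥ b ≥ 0`.
-/

namespace IsRYT

variable {μ : YoungDiagram} {T : ℕ × ℕ → ℕ}

theorem le_of_row_le (hT : IsRYT μ T) {i j b : ℕ} (hji : j ≤ i) (hmem : (i, b) ∈ μ) :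
    T (i, b) ≤ T (j, b) := by
  induction i, hji using Nat.le_induction with
  | base => exact le_rfl
  | succ i _ ih =>
    have hmem' : (i, b) ∈ μ := μ.up_left_mem (Nat.le_succ i) le_rfl hmem
    exact (hT.2 (i, b) ((YoungDiagram.mem_cells _).2 hmem')
      ((YoungDiagram.mem_cells _).2 hmem)).trans (ih hmem')

theorem precBox_of_row_lt (hT : IsRYT μ T) {i j b : ℕ} (hji : j < i) (hmem : (i, b) ∈ μ) :
    precBox T (j, b) (i, b) :=
  (hT.le_of_row_le hji.le hmem).lt_or_eq.imp id fun h => ⟨h.symm, Or.inr ⟨rfl, hji⟩⟩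

theorem row_le_card_precBox (hT : IsRYT μ T) {c : ℕ × ℕ} (hc : c ∈ μ) :
    c.1 ≤ (μ.cells.filter (fun a => precBox T a c)).card := by
  have hinj : Set.InjOn (fun i => (i, c.2)) (Finset.range c.1 : Set ℕ) :=
    fun _ _ _ _ h => congrArg Prod.fst h
  have hmaps : Set.MapsTo (fun i => (i, c.2)) (Finset.range c.1 : Set ℕ)
      (μ.cells.filter (fun a => precBox T a c)) := by
    intro i hi
    have hi : i < c.1 := Finset.mem_range.1 hi
    exact Finset.mem_filter.2 ⟨(YoungDiagram.mem_cells _).2 (μ.up_left_mem hi.le le_rfl hc),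
      hT.precBox_of_row_lt hi hc⟩
  simpa using Finset.card_le_card_of_injOn _ hmaps hinj

theorem content_add_Slab_sub_one_nonneg (hT : IsRYT μ T) {c : ℕ × ℕ} (hc : c ∈ μ) :
    0 ≤ content c + (Slab μ T c : ℤ) - 1 := by
  have hrow := hT.row_le_card_precBox hc
  simp only [content, Slab]
  omega

end IsRYT

/-- the statistic `b_T = ∑_{i=1}^n ν(T)_i (c_{S(T)}(i) + i - 1)` is a
non-negative integer. (Since the `i`-th largest value `ν(T)_i` of `T` sits in the box of
`μ` labelled `i` by `S(T)`, the sum may be re-indexed over the boxes of `μ`.) -/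
theorem bT_nonneg (μ : YoungDiagram) (T : ℕ × ℕ → ℕ) (hT : IsRYT μ T) :
    0 ≤ ∑ c ∈ μ.cells, (T c : ℤ) * (content c + (Slab μ T c : ℤ) - 1) :=
  Finset.sum_nonneg fun _ hc => mul_nonneg (Int.natCast_nonneg _)
    (hT.content_add_Slab_sub_one_nonneg ((YoungDiagram.mem_cells _).1 hc))
end
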